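/- Let D be a deterministic co-Büchi automaton with state set Q and set α. Define the FDFA F with leading automaton D (without acceptance) and, at each state q, a progress DFA of two copies of D starting at (q,0), moving permanently to copy 1 upon visiting a state of α, with accepting states Q × {0}. Then (u,v) is accepted by F if and only if u·v^ω is accepted by D, and F is saturated. -/

import Mathlib

open Classical

/-- `wpow v n` is the word `v` repeated `n` times. -/
def wpow {α : Type} (v : List α) : ℕ → List α
  | 0 => []
  | n + 1 => wpow v n ++ v

/-- The ultimately periodic infinite word `u·v^ω` (meaningful when `v ≠ []`). -/
def upWord {α : Type} [Inhabited α] (u v : List α) : ℕ → α := fun n =>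
  if n < u.length then u.getD n default
  else v.getD ((n - u.length) % v.length) default

/-- `l` is a prefix of the infinite word `w`. -/
def prefOf {α : Type} [Inhabited α] (l : List α) (w : ℕ → α) : Prop :=
  ∀ i < l.length, w i = l.getD i default

/-- A complete deterministic automaton (no acceptance condition). -/
structure DetAuto (α : Type) : Type 1 where
  State : Type
  [fin : Fintype State]
  init : State
  step : State → α → State

attribute [instance] DetAuto.fin

namespace DetAuto

variable {α : Type}

/-- The state reached from `q` after reading the finite word `w`. -/
def run (A : DetAuto α) (q : A.State) (w : List α) : A.State := w.foldl A.step q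

/-- The state reached from the initial state after reading `w`. -/
def eval (A : DetAuto α) (w : List α) : A.State := A.run A.init w

/-- The (infinite) run of `A` on an infinite word `w`. -/
def runSeq (A : DetAuto α) (w : ℕ → α) : ℕ → A.State
  | 0 => A.init
  | n + 1 => A.step (A.runSeq w n) (w n)

lemma exists_rep (A : DetAuto α) (u v : List α) :
    ∃ i, ∃ j, 1 ≤ j ∧ A.eval (u ++ wpow v i) = A.eval (u ++ wpow v (i + j)) := by
  obtain ⟨a, b, hab, hfab⟩ :=
    Finite.exists_ne_map_eq_of_infinite (fun n : ℕ => A.eval (u ++ wpow v n))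
  rcases Nat.lt_or_gt_of_ne hab with h | (h : b < a)
  · exact ⟨a, b - a, by omega, by rw [Nat.add_sub_cancel' h.le]; exact hfab⟩
  · exact ⟨b, a - b, by omega, by rw [Nat.add_sub_cancel' h.le]; exact hfab.symm⟩

/-- The least `i` in the normalization of `(u,v)` w.r.t. `A`. -/
noncomputable def normI (A : DetAuto α) (u v : List α) : ℕ :=
  Nat.find (A.exists_rep u v)

lemma normI_spec (A : DetAuto α) (u v : List α) :
    ∃ j, 1 ≤ j ∧ A.eval (u ++ wpow v (A.normI u v))
      = A.eval (u ++ wpow v (A.normI u v + j)) :=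
  Nat.find_spec (A.exists_rep u v)

/-- The least `j` in the normalization of `(u,v)` w.r.t. `A`. -/
noncomputable def normJ (A : DetAuto α) (u v : List α) : ℕ :=
  Nat.find (A.normI_spec u v)

/-- The normalization `(x, y) = (u·v^i, v^j)` of `(u,v)` w.r.t. `A`. -/
noncomputable def normalize (A : DetAuto α) (u v : List α) : List α × List α :=
  (u ++ wpow v (A.normI u v), wpow v (A.normJ u v))

/-- The product automaton. -/
def prod (A B : DetAuto α) : DetAuto α where
  State := A.State × B.State
  init := (A.init, B.init)
  step := fun p σ => (A.step p.1 σ, B.step p.2 σ)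

end DetAuto

/-- A family of DFAs: a leading automaton and a progress DFA for each of its states. -/
structure FDFA (α : Type) : Type 1 where
  leading : DetAuto α
  pState : leading.State → Type
  [pFin : ∀ q, Fintype (pState q)]
  pInit : ∀ q, pState q
  pStep : ∀ q, pState q → α → pState q
  pAcc : ∀ q, Set (pState q)

attribute [instance] FDFA.pFin

namespace FDFA

variable {α : Type}

/-- The progress DFA at state `q` accepts the finite word `y`. -/
def progAccept (F : FDFA α) (q : F.leading.State) (y : List α) : Prop :=
  y.foldl (F.pStep q) (F.pInit q) ∈ F.pAcc q

/-- `F` accepts the pair `(u, v)`: with `(x,y)` the normalization of `(u,v)` w.r.t.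
the leading automaton, the progress DFA at the state reached on `x` accepts `y`. -/
noncomputable def Accept (F : FDFA α) (u v : List α) : Prop :=
  F.progAccept (F.leading.eval (F.leading.normalize u v).1) (F.leading.normalize u v).2

/-- `F` is saturated: acceptance of `(u,v)` depends only on the infinite word `u·v^ω`. -/
def Saturated [Inhabited α] (F : FDFA α) : Prop :=
  ∀ u v u' v' : List α, v ≠ [] → v' ≠ [] → upWord u v = upWord u' v' →
    (F.Accept u v ↔ F.Accept u' v')

/-- The complement FDFA: same structure, complemented accepting states. -/
def compl (F : FDFA α) : FDFA α :=
  { F with pAcc := fun q => (F.pAcc q)ᶜ }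

end FDFA

/-- Co-Büchi acceptance: the run visits `acc` only finitely often. -/
def coBuchiAccepts {α : Type} (A : DetAuto α) (acc : Set A.State) (w : ℕ → α) : Prop :=
  {n | A.runSeq w n ∈ acc}.Finite

/-- The FDFA associated with a deterministic co-Büchi automaton: two copies of `A` per
progress DFA, moving permanently to the second copy upon visiting a state of `acc`;
accepting states are those in the first copy. -/
noncomputable def dcaToFdfa {α : Type} (A : DetAuto α) (acc : Set A.State) : FDFA α where
  leading := A
  pState := fun _ => A.State × Bool
  pInit := fun q => (q, false)
  pStep := fun _ p σ =>
    (A.step p.1 σ, if A.step p.1 σ ∈ acc then true else p.2)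
  pAcc := fun _ => {p | p.2 = false}

/-!
If the period `y` loops the automaton at `q = eval x`, then from position `|x|` on, the run on
`x·y^ω` repeats the run from `q` on `y` forever. Hence `acc` is visited infinitely often iff some
nonempty prefix of `y` leads from `q` into `acc`, which is exactly when the progress DFA at `q`
rejects `y`. The normalization `(x, y)` of `(u, v)` is such a pair and `x·y^ω = u·v^ω`; so
acceptance of `(u, v)` depends only on `u·v^ω`, which also gives saturation.
-/

section Words

variable {α : Type}

lemma wpow_length (v : List α) (m : ℕ) : (wpow v m).length = m * v.length := by
  induction m with
  | zero => simp [wpow]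
  | succ m ih => simp [wpow, ih, Nat.succ_mul]

lemma wpow_add (v : List α) (m n : ℕ) : wpow v (m + n) = wpow v m ++ wpow v n := by
  induction n with
  | zero => simp [wpow]
  | succ n ih => simp [wpow, ih]

lemma wpow_getD (v : List α) (d : α) {m t : ℕ} (ht : t < m * v.length) :
    (wpow v m).getD t d = v.getD (t % v.length) d := by
  induction m with
  | zero => omega
  | succ m ih =>
    rw [Nat.succ_mul] at ht
    by_cases h : t < m * v.length
    · rw [wpow, List.getD_append _ _ _ _ (by rwa [wpow_length]), ih h]
    · have hmod : t % v.length = t - m * v.length := by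
        conv_lhs => rw [← Nat.sub_add_cancel (not_lt.mp h)]
        rw [Nat.add_mul_mod_self_right, Nat.mod_eq_of_lt (by omega)]
      rw [wpow, List.getD_append_right _ _ _ _ (by rw [wpow_length]; omega), wpow_length, hmod]

variable [Inhabited α]

lemma upWord_wpow (u v : List α) {j : ℕ} (hj : j ≠ 0) :
    upWord u (wpow v j) = upWord u v := by
  funext n
  by_cases hv : v = []
  · simp [upWord, hv, wpow_length]
  have hlen : 0 < j * v.length := Nat.mul_pos (Nat.pos_of_ne_zero hj) (List.length_pos_iff.mpr hv)
  simp only [upWord, wpow_length]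
  rw [wpow_getD _ _ (Nat.mod_lt _ hlen), Nat.mod_mod_of_dvd _ (Dvd.intro_left j rfl)]

lemma upWord_append_wpow (u v : List α) (i : ℕ) :
    upWord (u ++ wpow v i) v = upWord u v := by
  funext n
  simp only [upWord, List.length_append, wpow_length]
  by_cases h₁ : n < u.length
  · rw [if_pos (by omega), if_pos h₁, List.getD_append _ _ _ _ h₁]
  rw [if_neg h₁]
  by_cases h₂ : n < u.length + i * v.length
  · rw [if_pos h₂, List.getD_append_right _ _ _ _ (by omega), wpow_getD _ _ (by omega)]
  · rw [if_neg h₂, Nat.sub_add_eq]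
    conv_rhs => rw [← Nat.sub_add_cancel (show i * v.length ≤ n - u.length by omega)]
    rw [Nat.add_mul_mod_self_right]

lemma prefOf_append_take_upWord (x y : List α) {r : ℕ} (hr : r ≤ y.length) :
    prefOf (x ++ y.take r) (upWord x y) := by
  intro n hn
  simp only [List.length_append, List.length_take] at hn
  by_cases h : n < x.length
  · rw [upWord, if_pos h, List.getD_append _ _ _ _ h]
  · rw [upWord, if_neg h, List.getD_append_right _ _ _ _ (by omega),
      Nat.mod_eq_of_lt (by omega), List.getD_eq_getElem _ _ (by omega),
      List.getD_eq_getElem _ _ (by simp; omega), List.getElem_take]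

end Words

namespace DetAuto

variable {α : Type} (A : DetAuto α)

lemma run_append (q : A.State) (x y : List α) : A.run q (x ++ y) = A.run (A.run q x) y :=
  List.foldl_append

lemma eval_append (x y : List α) : A.eval (x ++ y) = A.run (A.eval x) y :=
  A.run_append _ x y

lemma run_wpow_of_run_eq {q : A.State} {y : List α} (hy : A.run q y = q) (k : ℕ) :
    A.run q (wpow y k) = q := by
  induction k with
  | zero => rfl
  | succ k ih => rw [wpow, run_append, ih, hy]

lemma runSeq_length_of_prefOf [Inhabited α] {w : ℕ → α} {l : List α} (hl : prefOf l w) :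
    A.runSeq w l.length = A.eval l := by
  induction l using List.reverseRecOn with
  | nil => rfl
  | append_singleton l a ih =>
    have hlast : w l.length = a := by simpa using hl l.length (by simp)
    have hinit : prefOf l w := fun i hi =>
      (hl i (by simp; omega)).trans (List.getD_append _ _ _ _ hi)
    rw [List.length_append, List.length_singleton, runSeq, ih hinit, hlast, eval_append]
    rfl

lemma normJ_spec (u v : List α) :
    1 ≤ A.normJ u v ∧ A.eval (u ++ wpow v (A.normI u v))
      = A.eval (u ++ wpow v (A.normI u v + A.normJ u v)) :=
  Nat.find_spec (A.normI_spec u v)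

lemma normalize_spec [Inhabited α] {u v : List α} (hv : v ≠ []) :
    (A.normalize u v).2 ≠ [] ∧
      A.run (A.eval (A.normalize u v).1) (A.normalize u v).2 = A.eval (A.normalize u v).1 ∧
      upWord (A.normalize u v).1 (A.normalize u v).2 = upWord u v := by
  obtain ⟨hj, hloop⟩ := A.normJ_spec u v
  dsimp only [normalize]
  refine ⟨?_, ?_, ?_⟩
  · rw [← List.length_pos_iff, wpow_length]
    exact Nat.mul_pos hj (List.length_pos_iff.mpr hv)
  · rw [← eval_append, List.append_assoc, ← wpow_add]
    exact hloop.symm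
  · rw [upWord_wpow _ _ (Nat.one_le_iff_ne_zero.mp hj), upWord_append_wpow]

lemma runSeq_upWord_of_run_eq [Inhabited α] {x y : List α} (hy : A.run (A.eval x) y = A.eval x)
    (k : ℕ) {r : ℕ} (hr : r ≤ y.length) :
    A.runSeq (upWord x y) (x.length + k * y.length + r) = A.run (A.eval x) (y.take r) := by
  have hpref := prefOf_append_take_upWord (x ++ wpow y k) y hr
  rw [upWord_append_wpow] at hpref
  rw [← A.run_wpow_of_run_eq hy k, ← A.eval_append, ← A.eval_append,
    ← A.runSeq_length_of_prefOf hpref]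
  simp [wpow_length, hr, Nat.add_assoc]

end DetAuto

section CoBuchi

variable {α : Type} (A : DetAuto α) (acc : Set A.State)

lemma coBuchiAccepts_upWord_iff [Inhabited α] {x y : List α} (hy : y ≠ [])
    (hloop : A.run (A.eval x) y = A.eval x) :
    coBuchiAccepts A acc (upWord x y) ↔
      ∀ r < y.length, A.run (A.eval x) (y.take (r + 1)) ∉ acc := by
  have hlen : 0 < y.length := List.length_pos_iff.mpr hy
  constructor
  · intro hfin r hr hmem
    refine Set.infinite_of_injective_forall_mem (f := fun k => x.length + k * y.length + (r + 1))
      (strictMono_nat_of_lt_succ fun k => ?_).injective (fun k => ?_) hfin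
    · simp only [Nat.succ_mul]; omega
    · simpa [A.runSeq_upWord_of_run_eq hloop k hr] using hmem
  · intro h
    refine (Set.finite_Iic x.length).subset fun n hn => ?_
    by_contra hn'
    obtain ⟨k, r, hr, rfl⟩ : ∃ k r, r < y.length ∧ n = x.length + k * y.length + (r + 1) :=
      ⟨(n - x.length - 1) / y.length, (n - x.length - 1) % y.length, Nat.mod_lt _ hlen, by
        have := Nat.div_add_mod' (n - x.length - 1) y.length
        simp only [Set.mem_Iic, not_le] at hn'
        omega⟩
    exact h r hr (by simpa [A.runSeq_upWord_of_run_eq hloop k hr] using hn)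

lemma dcaToFdfa_foldl_pStep_snd_eq_false (q p : A.State) (b : Bool) (l : List α) :
    (l.foldl ((dcaToFdfa A acc).pStep q) (p, b)).2 = false ↔
      b = false ∧ ∀ r < l.length, A.run p (l.take (r + 1)) ∉ acc := by
  induction l generalizing p b with
  | nil => exact ⟨fun h => ⟨h, by simp⟩, And.left⟩
  | cons a l ih =>
    show (l.foldl _ (A.step p a, if A.step p a ∈ acc then true else b)).2 = false ↔ _
    refine (ih _ _).trans ?_
    rw [List.length_cons, Nat.forall_lt_succ_left]
    by_cases ha : A.step p a ∈ acc <;> simp [ha, DetAuto.run]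

lemma dcaToFdfa_progAccept_iff (q : A.State) (y : List α) :
    (dcaToFdfa A acc).progAccept q y ↔ ∀ r < y.length, A.run q (y.take (r + 1)) ∉ acc :=
  (dcaToFdfa_foldl_pStep_snd_eq_false A acc q q false y).trans (and_iff_right rfl)

lemma dcaToFdfa_accept_iff [Inhabited α] {u v : List α} (hv : v ≠ []) :
    (dcaToFdfa A acc).Accept u v ↔ coBuchiAccepts A acc (upWord u v) := by
  obtain ⟨hy, hloop, hword⟩ := A.normalize_spec (u := u) hv
  rw [← hword, coBuchiAccepts_upWord_iff A acc hy hloop]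
  exact dcaToFdfa_progAccept_iff A acc _ _

end CoBuchi

/-- The FDFA built from a deterministic co-Büchi automaton `(A, acc)`
accepts `(u,v)` iff `A` co-Büchi-accepts `u·v^ω`, and it is saturated. -/
theorem dca_to_fdfa_correct {α : Type} [Inhabited α] (A : DetAuto α)
    (acc : Set A.State) :
    (∀ u v : List α, v ≠ [] →
      ((dcaToFdfa A acc).Accept u v ↔ coBuchiAccepts A acc (upWord u v))) ∧
    (dcaToFdfa A acc).Saturated :=
  ⟨fun _ _ hv => dcaToFdfa_accept_iff A acc hv, fun u v u' v' hv hv' hw => by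
    rw [dcaToFdfa_accept_iff A acc hv, dcaToFdfa_accept_iff A acc hv', hw]⟩
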